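/- arXiv:1404.0357 — 4 statements merged into one kernel-verified Lean document; each statement's English description precedes it below -/
import Mathlib

section
/- Let E be a module over L⁰ and let U ⊆ E be L⁰-convex, L⁰-absorbent, L⁰-balanced and closed under countable concatenations. For X ∈ E suppose c ∈ L⁰ is a greatest lower bound (in the a.e. order) of the set {Y ∈ L⁰₊ : X ∈ Y•U}. Then: (i) if c < 1 a.e. then X ∈ U; (ii) if X ∈ U then c ≤ 1 a.e. In other words, {X ∈ E : p_U(X) < 1} ⊆ U ⊆ {X ∈ E : p_U(X) ≤ 1}. -/
/-!
The sets `{Y < 1}`, `Y ∈ gaugeSet U X`, are closed under finite unions because `L⁰`-convexity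
makes the gauge set closed under `⊓` (glue two representations of `X` along `{Y₁ ≤ Y₂}`), so a
countable subfamily `{W n < 1}` exhausts them up to null sets. Off their union every `Y` in the
gauge set is `≥ 1`, hence so is the infimum `c`; thus `c < 1` forces the `{W n < 1}` to cover
`Ω`. On `{W n < 1}`, `X = W n • u` with `u ∈ U` agrees with `(1_{W n < 1} W n) • u`, which lies in
`U` by balancedness, and concatenation gives `X ∈ U`. Conversely `1` lies in the gauge set of
any `X ∈ U`.
-/

open MeasureTheory Filter Pointwise

variable {Ω : Type*} [MeasurableSpace Ω] (P : MeasureTheory.Measure Ω ) [IsProbabilityMeasure P]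

noncomputable instance : CommRing (Ω →ₘ[P] ℝ) :=
  { (inferInstance : AddCommGroup (Ω →ₘ[P] ℝ)),
    (inferInstance : CommMonoid (Ω →ₘ[P] ℝ)) with
    left_distrib := fun f g h => AEEqFun.ext (by
      filter_upwards [AEEqFun.coeFn_mul f (g + h), AEEqFun.coeFn_add g h,
        AEEqFun.coeFn_add (f * g) (f * h), AEEqFun.coeFn_mul f g, AEEqFun.coeFn_mul f h]
        with ω h1 h2 h3 h4 h5
      simp only [Pi.mul_apply, Pi.add_apply] at *
      rw [h1, h2, h3, h4, h5, mul_add])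
    right_distrib := fun f g h => AEEqFun.ext (by
      filter_upwards [AEEqFun.coeFn_mul (f + g) h, AEEqFun.coeFn_add f g,
        AEEqFun.coeFn_add (f * h) (g * h), AEEqFun.coeFn_mul f h, AEEqFun.coeFn_mul g h]
        with ω h1 h2 h3 h4 h5
      simp only [Pi.mul_apply, Pi.add_apply] at *
      rw [h1, h2, h3, h4, h5, add_mul])
    zero_mul := fun f => AEEqFun.ext (by
      filter_upwards [AEEqFun.coeFn_mul 0 f, AEEqFun.coeFn_zero (β := ℝ) (μ := P)]
        with ω h1 h2
      simp only [Pi.mul_apply, Pi.zero_apply] at *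
      rw [h1, h2, zero_mul])
    mul_zero := fun f => AEEqFun.ext (by
      filter_upwards [AEEqFun.coeFn_mul f 0, AEEqFun.coeFn_zero (β := ℝ) (μ := P)]
        with ω h1 h2
      simp only [Pi.mul_apply, Pi.zero_apply] at *
      rw [h1, h2, mul_zero]) }

/-- `L⁰₊₊`: the set of a.e. strictly positive elements. -/
def L0pp (Y : Ω →ₘ[P] ℝ) : Prop := ∀ᵐ ω ∂P, 0 < Y ω

/-- The equivalence class of the indicator function of a measurable set. -/
noncomputable def ind (A : Set Ω) (hA : MeasurableSet A) : Ω →ₘ[P] ℝ :=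
  AEEqFun.mk (A.indicator fun _ => (1 : ℝ)) (aestronglyMeasurable_const.indicator hA)

section ModuleDefs

variable {E : Type*} [AddCommGroup E] [Module (Ω →ₘ[P] ℝ) E]

/-- `L⁰`-convexity of a subset of an `L⁰`-module. -/
def IsL0Convex (U : Set E) : Prop :=
  ∀ X₁ ∈ U, ∀ X₂ ∈ U, ∀ Y : Ω →ₘ[P] ℝ, 0 ≤ Y → Y ≤ 1 → Y • X₁ + (1 - Y) • X₂ ∈ U

/-- `L⁰`-absorbency of a subset of an `L⁰`-module. -/
def IsL0Absorbent (U : Set E) : Prop :=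
  ∀ X : E, ∃ Y : Ω →ₘ[P] ℝ, L0pp P Y ∧ X ∈ Y • U

/-- `L⁰`-balancedness of a subset of an `L⁰`-module. -/
def IsL0Balanced (U : Set E) : Prop :=
  ∀ X ∈ U, ∀ Y : Ω →ₘ[P] ℝ, |Y| ≤ 1 → Y • X ∈ U

/-- Closedness under countable concatenations. -/
def IsConcatClosed (C : Set E) : Prop :=
  ∀ (A : ℕ → Set Ω) (hA : ∀ n, MeasurableSet (A n)),
    Pairwise (Function.onFun Disjoint A) → (⋃ n, A n) = Set.univ →
    ∀ X : E, (∀ n, ∃ Xn ∈ C, ind P (A n) (hA n) • X = ind P (A n) (hA n) • Xn) → X ∈ C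

/-- `L⁰`-seminorm. -/
def IsL0Seminorm (p : E → (Ω →ₘ[P] ℝ)) : Prop :=
  (∀ X : E, 0 ≤ p X) ∧ (∀ (Y : Ω →ₘ[P] ℝ) (X : E), p (Y • X) = |Y| * p X) ∧
    (∀ X₁ X₂ : E, p (X₁ + X₂) ≤ p X₁ + p X₂)

/-- The set whose essential infimum is the gauge `p_K(X)`. -/
def gaugeSet (K : Set E) (X : E) : Set (Ω →ₘ[P] ℝ) :=
  {Y : Ω →ₘ[P] ℝ | 0 ≤ Y ∧ X ∈ Y • K}

end ModuleDefs

open scoped ENNReal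

section

variable {α : Type*} [MeasurableSpace α] {μ : Measure α}
  {E : Type*} [AddCommGroup E] [Module (α →ₘ[μ] ℝ) E]

/-- Take `A n` with `μ (A n)` within `1/n` of `⨆ A ∈ 𝒜, μ A`; since `B ∪ A n ∈ 𝒜`, this forces
`μ (B \ A n) < 1/n`. -/
theorem exists_seq_ae_le_iUnion_of_union_mem [IsFiniteMeasure μ] {𝒜 : Set (Set α)}
    (hne : 𝒜.Nonempty) (hmeas : ∀ A ∈ 𝒜, NullMeasurableSet A μ)
    (hunion : ∀ A ∈ 𝒜, ∀ B ∈ 𝒜, A ∪ B ∈ 𝒜) :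
    ∃ A : ℕ → Set α, (∀ n, A n ∈ 𝒜) ∧ ∀ B ∈ 𝒜, B ≤ᵐ[μ] ⋃ n, A n := by
  have : Nonempty 𝒜 := hne.to_subtype
  set s := ⨆ A : 𝒜, μ A
  have hs : s ≠ ∞ := ne_top_of_le_ne_top (measure_ne_top μ Set.univ)
    (iSup_le fun A => measure_mono (Set.subset_univ _))
  have hA : ∀ n : ℕ, ∃ A : 𝒜, s < μ A + (n : ℝ≥0∞)⁻¹ := fun n => by
    have h := ENNReal.lt_add_right hs (ENNReal.inv_ne_zero.mpr (ENNReal.natCast_ne_top n))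
    rwa [ENNReal.iSup_add, lt_iSup_iff] at h
  choose A hA using hA
  refine ⟨fun n => A n, fun n => (A n).2, fun B hB => ae_le_set.mpr ?_⟩
  have hsmall : ∀ n : ℕ, μ (B \ ⋃ n, A n) < (n : ℝ≥0∞)⁻¹ := fun n => by
    have hBA : μ ((B ∪ A n) \ A n) < (n : ℝ≥0∞)⁻¹ :=
      measure_sdiff_lt_of_lt_add (hmeas _ (A n).2) Set.subset_union_right (measure_ne_top μ _)
        ((le_iSup (fun A : 𝒜 => μ A) ⟨_, hunion B hB _ (A n).2⟩).trans_lt (hA n))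
    refine (measure_mono fun ω hω => ?_).trans_lt hBA
    exact ⟨Or.inl hω.1, fun h => hω.2 (Set.mem_iUnion.mpr ⟨n, h⟩)⟩
  by_contra h
  obtain ⟨n, hn⟩ := ENNReal.exists_inv_nat_lt h
  exact (hsmall n).not_gt hn

theorem exists_seq_forall_ae_lt_imp_exists_lt [IsFiniteMeasure μ] {S : Set (α →ₘ[μ] ℝ)}
    (hne : S.Nonempty) (hinf : ∀ Y₁ ∈ S, ∀ Y₂ ∈ S, Y₁ ⊓ Y₂ ∈ S) (a : ℝ) :
    ∃ W : ℕ → α →ₘ[μ] ℝ, (∀ n, W n ∈ S) ∧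
      ∀ Y ∈ S, ∀ᵐ ω ∂μ, Y ω < a → ∃ n, W n ω < a := by
  have hlt : ∀ Y : α →ₘ[μ] ℝ, MeasurableSet {ω | Y ω < a} :=
    fun Y => measurableSet_lt Y.measurable measurable_const
  obtain ⟨A, hA𝒜, hA⟩ := exists_seq_ae_le_iUnion_of_union_mem (μ := μ)
    (𝒜 := {A | ∃ Y ∈ S, A =ᵐ[μ] {ω | Y ω < a}})
    (let ⟨Y, hY⟩ := hne; ⟨_, Y, hY, EventuallyEq.rfl⟩)
    (fun _ ⟨Y, _, hA⟩ => (hlt Y).nullMeasurableSet.congr hA.symm)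
    (fun _ ⟨Y₁, hY₁, hA₁⟩ _ ⟨Y₂, hY₂, hA₂⟩ => ⟨Y₁ ⊓ Y₂, hinf Y₁ hY₁ Y₂ hY₂, by
      refine (hA₁.union hA₂).trans (eventuallyEq_set.mpr ?_)
      filter_upwards [AEEqFun.coeFn_inf Y₁ Y₂] with ω h
      simp [h]⟩)
  choose W hWS hW using hA𝒜
  refine ⟨W, hWS, fun Y hY => ?_⟩
  filter_upwards [hA _ ⟨Y, hY, EventuallyEq.rfl⟩, ae_all_iff.mpr hW] with ω hcover hWω hYω
  obtain ⟨n, hn⟩ := Set.mem_iUnion.mp (hcover hYω)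
  exact ⟨n, (hWω n).mp hn⟩

theorem AEEqFun.nonempty_of_isGLB [NeZero μ] {S : Set (α →ₘ[μ] ℝ)} {c : α →ₘ[μ] ℝ}
    (hc : IsGLB S c) : S.Nonempty := by
  by_contra hS
  rw [Set.not_nonempty_iff_eq_empty] at hS
  have hle : ∀ᵐ ω ∂μ, (c + 1) ω ≤ c ω := AEEqFun.coeFn_le.mpr (hc.2 (by simp [hS]))
  obtain ⟨ω, hω, hadd, hone⟩ :=
    (hle.and ((AEEqFun.coeFn_add c 1).and (AEEqFun.coeFn_one (β := ℝ)))).exists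
  simp only [Pi.add_apply, Pi.one_apply] at hω hadd hone
  linarith

/-- On the set where all `W n ≥ a`, every `Y ∈ S` is `≥ a`, so the function equal to `a` there
and to `c` elsewhere is a lower bound of `S`. -/
theorem ae_exists_lt_of_isGLB {S : Set (α →ₘ[μ] ℝ)} {c : α →ₘ[μ] ℝ} (hc : IsGLB S c) {a : ℝ}
    {W : ℕ → α →ₘ[μ] ℝ} (hW : ∀ Y ∈ S, ∀ᵐ ω ∂μ, Y ω < a → ∃ n, W n ω < a)
    (hca : ∀ᵐ ω ∂μ, c ω < a) : ∀ᵐ ω ∂μ, ∃ n, W n ω < a := by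
  classical
  set B := ⋂ n, {ω | a ≤ W n ω}
  have hB : MeasurableSet B :=
    MeasurableSet.iInter fun n => measurableSet_le measurable_const (W n).measurable
  have hd : AEStronglyMeasurable (B.piecewise (fun _ => a) c) μ :=
    (Measurable.piecewise hB measurable_const c.measurable).aestronglyMeasurable
  have hdS : AEEqFun.mk _ hd ∈ lowerBounds S := fun Y hY => by
    refine AEEqFun.coeFn_le.mp ?_
    filter_upwards [AEEqFun.coeFn_mk _ hd, AEEqFun.coeFn_le.mpr (hc.1 hY), hW Y hY]
      with ω hdω hcY hYW
    rw [hdω]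
    by_cases hωB : ω ∈ B
    · rw [Set.piecewise_eq_of_mem _ _ _ hωB]
      by_contra! hlt
      obtain ⟨n, hn⟩ := hYW hlt
      exact (Set.mem_iInter.mp hωB n).not_gt hn
    · rwa [Set.piecewise_eq_of_notMem _ _ _ hωB]
  filter_upwards [AEEqFun.coeFn_mk _ hd, AEEqFun.coeFn_le.mpr (hc.2 hdS), hca]
    with ω hdω hdc hcω
  by_contra! hωB
  replace hωB : ω ∈ B := Set.mem_iInter.mpr hωB
  rw [hdω, Set.piecewise_eq_of_mem _ _ _ hωB] at hdc
  exact hdc.not_gt hcω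

theorem ind_ae_eq (A : Set α) (hA : MeasurableSet A) :
    ind μ A hA =ᵐ[μ] A.indicator (fun _ => (1 : ℝ)) :=
  AEEqFun.coeFn_mk _ _

theorem ind_nonneg (A : Set α) (hA : MeasurableSet A) : 0 ≤ ind μ A hA := by
  refine AEEqFun.coeFn_le.mp ?_
  filter_upwards [AEEqFun.coeFn_zero (β := ℝ) (μ := μ), ind_ae_eq A hA] with ω h0 hA
  rw [h0, hA]
  exact Set.indicator_nonneg (fun _ _ => zero_le_one) ω

theorem ind_le_one (A : Set α) (hA : MeasurableSet A) : ind μ A hA ≤ 1 := by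
  refine AEEqFun.coeFn_le.mp ?_
  filter_upwards [AEEqFun.coeFn_one (β := ℝ) (μ := μ), ind_ae_eq A hA] with ω h1 hA
  rw [h1, hA]
  exact Set.indicator_le_self' (fun _ _ => zero_le_one) ω

theorem ind_mul_ind_of_ae_le {A B : Set α} (hA : MeasurableSet A) (hB : MeasurableSet B)
    (hAB : A ≤ᵐ[μ] B) : ind μ A hA * ind μ B hB = ind μ A hA := by
  refine AEEqFun.ext ?_
  filter_upwards [AEEqFun.coeFn_mul (ind μ A hA) (ind μ B hB), ind_ae_eq A hA, ind_ae_eq B hB,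
    hAB] with ω hmul hAω hBω hABω
  rw [hmul, Pi.mul_apply, hAω, hBω]
  by_cases h : ω ∈ A
  · simp [h, show ω ∈ B from hABω h]
  · simp [h]

theorem inf_eq_ind_mul_add (Y₁ Y₂ : α →ₘ[μ] ℝ) (hA : MeasurableSet {ω | Y₁ ω ≤ Y₂ ω}) :
    Y₁ ⊓ Y₂ = ind μ _ hA * Y₁ + (1 - ind μ _ hA) * Y₂ := by
  refine AEEqFun.ext ?_
  filter_upwards [AEEqFun.coeFn_inf Y₁ Y₂,
    AEEqFun.coeFn_add (ind μ _ hA * Y₁) ((1 - ind μ _ hA) * Y₂),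
    AEEqFun.coeFn_mul (ind μ _ hA) Y₁, AEEqFun.coeFn_mul (1 - ind μ _ hA) Y₂,
    AEEqFun.coeFn_sub 1 (ind μ _ hA), AEEqFun.coeFn_one (β := ℝ) (μ := μ), ind_ae_eq _ hA]
    with ω hinf hadd hmul₁ hmul₂ hsub hone hind
  simp only [hinf, hadd, Pi.add_apply, hmul₁, hmul₂, Pi.mul_apply, hsub, Pi.sub_apply, hone,
    Pi.one_apply, hind]
  by_cases h : Y₁ ω ≤ Y₂ ω
  · simp [h]
  · simp [h, (not_le.mp h).le]

theorem abs_ind_mul_le_one {Y : α →ₘ[μ] ℝ} (hY : 0 ≤ Y) (hA : MeasurableSet {ω | Y ω < 1}) :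
    |ind μ _ hA * Y| ≤ 1 := by
  refine AEEqFun.coeFn_le.mp ?_
  filter_upwards [AEEqFun.coeFn_abs (ind μ _ hA * Y), AEEqFun.coeFn_mul (ind μ _ hA) Y,
    ind_ae_eq _ hA, AEEqFun.coeFn_one (β := ℝ) (μ := μ), AEEqFun.coeFn_le.mpr hY,
    AEEqFun.coeFn_zero (β := ℝ) (μ := μ)] with ω habs hmul hind hone hYω hzero
  simp only [habs, hmul, Pi.mul_apply, hind, hone, Pi.one_apply]
  rw [hzero] at hYω
  by_cases h : Y ω < 1
  · simpa [h, abs_of_nonneg hYω] using h.le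
  · simp [h]


theorem IsConcatClosed.mem_of_ae_exists_mem {C : Set E} (hC : IsConcatClosed μ C)
    {A : ℕ → Set α} (hA : ∀ n, MeasurableSet (A n)) (hcover : ∀ᵐ ω ∂μ, ∃ n, ω ∈ A n) {X : E}
    (hX : ∀ n, ∃ Xn ∈ C, ind μ (A n) (hA n) • X = ind μ (A n) (hA n) • Xn) : X ∈ C := by
  set N := (⋃ n, A n)ᶜ
  have hN : μ N = 0 := measure_eq_zero_iff_ae_notMem.mpr <| by
    filter_upwards [hcover] with ω hω
    simpa [N] using hω
  have hNmeas : MeasurableSet N := (MeasurableSet.iUnion hA).compl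
  set D := disjointed fun n => A n ∪ N
  have hD : ∀ n, MeasurableSet (D n) := MeasurableSet.disjointed fun n => (hA n).union hNmeas
  have hDunion : ⋃ n, D n = Set.univ := by
    rw [iUnion_disjointed, ← Set.iUnion_union, Set.union_compl_self]
  refine hC D hD (disjoint_disjointed _) hDunion X fun n => ?_
  obtain ⟨Xn, hXn, hAX⟩ := hX n
  have hDA : D n ≤ᵐ[μ] A n := ae_le_set.mpr <| measure_mono_null
    (fun ω hω => (disjointed_subset _ n hω.1).resolve_left hω.2) hN
  refine ⟨Xn, hXn, ?_⟩
  rw [← ind_mul_ind_of_ae_le (hD n) (hA n) hDA, mul_smul, mul_smul, hAX]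

theorem inf_mem_gaugeSet {U : Set E} (hconv : IsL0Convex μ U) {X : E} {Y₁ Y₂ : α →ₘ[μ] ℝ}
    (h₁ : Y₁ ∈ gaugeSet μ U X) (h₂ : Y₂ ∈ gaugeSet μ U X) : Y₁ ⊓ Y₂ ∈ gaugeSet μ U X := by
  obtain ⟨hY₁, u₁, hu₁, hX₁⟩ := h₁
  obtain ⟨hY₂, u₂, hu₂, hX₂⟩ := h₂
  have hA : MeasurableSet {ω | Y₁ ω ≤ Y₂ ω} := measurableSet_le Y₁.measurable Y₂.measurable
  set e := ind μ _ hA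
  have he : e * e = e := ind_mul_ind_of_ae_le hA hA EventuallyLE.rfl
  refine ⟨le_inf hY₁ hY₂, e • u₁ + (1 - e) • u₂,
    hconv u₁ hu₁ u₂ hu₂ e (ind_nonneg _ hA) (ind_le_one _ hA), ?_⟩
  rw [inf_eq_ind_mul_add Y₁ Y₂ hA]
  linear_combination (norm := module) e • hX₁ + (1 - e) • hX₂ +
    he • (Y₁ • u₁ - Y₁ • u₂ - Y₂ • u₁ + Y₂ • u₂)

theorem mem_of_mem_gaugeSet_of_ae_exists_lt_one {U : Set E} (hbal : IsL0Balanced μ U)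
    (hconcat : IsConcatClosed μ U) {X : E} {W : ℕ → α →ₘ[μ] ℝ} (hW : ∀ n, W n ∈ gaugeSet μ U X)
    (hcover : ∀ᵐ ω ∂μ, ∃ n, W n ω < 1) : X ∈ U := by
  have hA : ∀ n, MeasurableSet {ω | W n ω < 1} :=
    fun n => measurableSet_lt (W n).measurable measurable_const
  refine hconcat.mem_of_ae_exists_mem hA hcover fun n => ?_
  obtain ⟨hWn, u, hu, rfl⟩ := hW n
  refine ⟨(ind μ _ (hA n) * W n) • u, hbal u hu _ (abs_ind_mul_le_one hWn (hA n)), ?_⟩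
  rw [smul_smul, smul_smul, ← mul_assoc, ind_mul_ind_of_ae_le (hA n) (hA n) EventuallyLE.rfl]

theorem one_mem_gaugeSet {U : Set E} {X : E} (hX : X ∈ U) : 1 ∈ gaugeSet μ U X :=
  ⟨AEEqFun.coeFn_le.mp <| by
    filter_upwards [AEEqFun.coeFn_zero (β := ℝ) (μ := μ), AEEqFun.coeFn_one (β := ℝ) (μ := μ)]
      with ω h0 h1
    simp [h0, h1],
   X, hX, one_smul _ X⟩

end

theorem stmt_3_general {Ω : Type*} [MeasurableSpace Ω] (P : MeasureTheory.Measure Ω)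
    [IsProbabilityMeasure P]
    {E : Type*} [AddCommGroup E] [Module (Ω →ₘ[P] ℝ) E]
    (U : Set E) (hconv : IsL0Convex P U)
    (hbal : IsL0Balanced P U) (hconcat : IsConcatClosed P U)
    (X : E) (c : Ω →ₘ[P] ℝ) (hc : IsGLB (gaugeSet P U X) c) :
    ((∀ᵐ ω ∂P, c ω < 1) → X ∈ U) ∧ (X ∈ U → c ≤ 1) := by
  refine ⟨fun hc_lt => ?_, fun hX => hc.1 (one_mem_gaugeSet hX)⟩
  obtain ⟨W, hWS, hW⟩ := exists_seq_forall_ae_lt_imp_exists_lt (AEEqFun.nonempty_of_isGLB hc)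
    (fun _ h₁ _ h₂ => inf_mem_gaugeSet hconv h₁ h₂) 1
  exact mem_of_mem_gaugeSet_of_ae_exists_lt_one hbal hconcat hWS
    (ae_exists_lt_of_isGLB hc hW hc_lt)

/-- `{X : p_U(X) < 1} ⊆ U ⊆ {X : p_U(X) ≤ 1}` for a concatenation-closed
`L⁰`-convex, `L⁰`-absorbent, `L⁰`-balanced set `U`. -/
theorem stmt_3 {Ω : Type*} [MeasurableSpace Ω] (P : MeasureTheory.Measure Ω)
    [IsProbabilityMeasure P]
    {E : Type*} [AddCommGroup E] [Module (Ω →ₘ[P] ℝ) E]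
    (U : Set E) (hconv : IsL0Convex P U) (habs : IsL0Absorbent P U)
    (hbal : IsL0Balanced P U) (hconcat : IsConcatClosed P U)
    (X : E) (c : Ω →ₘ[P] ℝ) (hc : IsGLB (gaugeSet P U X) c) :
    ((∀ᵐ ω ∂P, c ω < 1) → X ∈ U) ∧ (X ∈ U → c ≤ 1) :=
  stmt_3_general P U hconv hbal hconcat X c hc
end

section
/- Let E be a module over L⁰ and K ⊆ E an L⁰-convex and L⁰-absorbent set, and let X ∈ E. If a ∈ L⁰ is a greatest lower bound (a.e. order) of {Y ∈ L⁰₊ : X ∈ Y•K}, then for every Z ∈ L⁰₊ the element Z·a is a greatest lower bound of {Y ∈ L⁰₊ : Z•X ∈ Y•K}; i.e., Z·p_K(X) = p_K(Z•X) for all Z ∈ L⁰₊. -/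
open MeasureTheory Filter Pointwise

variable {Ω : Type*} [MeasurableSpace Ω] (P : MeasureTheory.Measure Ω ) [IsProbabilityMeasure P]

/-! With the convention `0⁻¹ = 0`, `u = Z⁻¹` is a generalized inverse of `Z` in `L⁰`
(`Z u Z = Z`, `u Z u = u`) and `e = Z u` is the indicator of `{Z > 0}`. Scaling by `Z` maps
`gaugeSet X` into `gaugeSet (Z • X)`. Conversely, if `Z • X = Y • k` with `k ∈ K` and
`X = V • k'` with `k' ∈ K` (absorbency), then `X = (u Y + (1 - e) V) • (e k + (1 - e) k')`,
and the second factor lies in `K` by `L⁰`-convexity. Comparing the two gauge sets through these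
maps, separately on `{Z > 0}` and `{Z = 0}` via `e`, is ordered-ring algebra in `L⁰`. -/

namespace MeasureTheory.AEEqFun

variable {Ω : Type*} [MeasurableSpace Ω] {P : Measure Ω}

theorem nonneg_iff_ae {f : Ω →ₘ[P] ℝ} : 0 ≤ f ↔ ∀ᵐ ω ∂P, 0 ≤ f ω := by
  rw [← coeFn_le]
  refine eventually_congr ?_
  filter_upwards [coeFn_zero (β := ℝ) (μ := P)] with ω h
  rw [h, Pi.zero_apply]

instance : IsOrderedAddMonoid (Ω →ₘ[P] ℝ) where
  add_le_add_left f g hfg h := by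
    rw [← coeFn_le] at hfg ⊢
    filter_upwards [hfg, coeFn_add f h, coeFn_add g h] with ω hω hf hg
    simpa [hf, hg] using hω

instance : IsOrderedRing (Ω →ₘ[P] ℝ) :=
  have : ZeroLEOneClass (Ω →ₘ[P] ℝ) := ⟨by
    rw [← coeFn_le]
    filter_upwards [coeFn_zero (β := ℝ) (μ := P), coeFn_one (β := ℝ) (μ := P)] with ω h0 h1
    simp [h0, h1]⟩
  .of_mul_nonneg fun f g hf hg => by
    rw [nonneg_iff_ae] at hf hg ⊢
    filter_upwards [hf, hg, coeFn_mul f g] with ω hfω hgω h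
    rw [h]
    exact mul_nonneg hfω hgω

theorem exists_generalizedInverse {Z : Ω →ₘ[P] ℝ} (hZ : 0 ≤ Z) :
    ∃ u : Ω →ₘ[P] ℝ, 0 ≤ u ∧ Z * u ≤ 1 ∧ Z * u * Z = Z ∧ u * Z * u = u := by
  set u := Z.compMeasurable (·⁻¹) measurable_inv
  have hu : ⇑u =ᵐ[P] fun ω => (Z ω)⁻¹ := coeFn_compMeasurable _ _ _
  refine ⟨u, ?_, ?_, ?_, ?_⟩
  · rw [nonneg_iff_ae] at hZ ⊢
    filter_upwards [hZ, hu] with ω hZω huω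
    rw [huω]
    exact inv_nonneg.2 hZω
  · rw [← coeFn_le]
    filter_upwards [coeFn_mul Z u, hu, coeFn_one (β := ℝ) (μ := P)] with ω h huω h1
    rw [h, h1, Pi.mul_apply, huω]
    exact mul_inv_le_one
  · ext1
    filter_upwards [coeFn_mul (Z * u) Z, coeFn_mul Z u, hu] with ω h h' huω
    rw [h, Pi.mul_apply, h', Pi.mul_apply, huω, mul_inv_mul_cancel]
  · ext1
    filter_upwards [coeFn_mul (u * Z) u, coeFn_mul u Z, hu] with ω h h' huω
    rw [h, Pi.mul_apply, h', Pi.mul_apply, huω]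
    simpa only [inv_inv] using mul_inv_mul_cancel (Z ω)⁻¹

end MeasureTheory.AEEqFun

theorem IsGLB.mul_of_generalizedInverse {R : Type*} [CommRing R] [PartialOrder R]
    [IsOrderedRing R] {S T : Set R} {a Z u V : R} (ha : IsGLB S a) (hZ : 0 ≤ Z) (hu : 0 ≤ u)
    (hZu : Z * u ≤ 1) (hZuZ : Z * u * Z = Z) (hV : V ∈ S) (hST : ∀ Y ∈ S, Z * Y ∈ T)
    (hT : ∀ Y ∈ T, 0 ≤ Y)
    (hTS : ∀ Y ∈ T, u * Y + (1 - Z * u) * V ∈ S) : IsGLB T (Z * a) := by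
  have hZu' : 0 ≤ 1 - Z * u := sub_nonneg.2 hZu
  have hZ_mul (W W' : R) : Z * (u * W + (1 - Z * u) * W') = Z * u * W := by
    linear_combination (-W') * hZuZ
  refine ⟨fun Y hY => ?_, fun b hb => ?_⟩
  · calc Z * a ≤ Z * (u * Y + (1 - Z * u) * V) := mul_le_mul_of_nonneg_left (ha.1 (hTS Y hY)) hZ
      _ = Z * u * Y := hZ_mul Y V
      _ ≤ Y := sub_nonneg.1 <| by
        simpa only [sub_mul, one_mul] using mul_nonneg hZu' (hT Y hY)
  · have hc : u * b + (1 - Z * u) * a ≤ a := ha.2 fun Y hY =>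
      calc u * b + (1 - Z * u) * a ≤ u * (Z * Y) + (1 - Z * u) * Y :=
            add_le_add (mul_le_mul_of_nonneg_left (hb (hST Y hY)) hu)
              (mul_le_mul_of_nonneg_left (ha.1 hY) hZu')
        _ = Y := by ring
    have hb_le : b ≤ Z * u * b := by
      have h := mul_le_mul_of_nonneg_left (hb (hST V hV)) hZu'
      rw [show (1 - Z * u) * (Z * V) = 0 by linear_combination (-V) * hZuZ, sub_mul, one_mul] at h
      exact sub_nonpos.1 h
    calc b ≤ Z * u * b := hb_le
      _ = Z * (u * b + (1 - Z * u) * a) := (hZ_mul b a).symm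
      _ ≤ Z * a := mul_le_mul_of_nonneg_left hc hZ

theorem smul_convexComb_eq {R E : Type*} [CommRing R] [AddCommGroup E] [Module R E]
    {Z u Y V : R} {X k k' : E} (hZuZ : Z * u * Z = Z) (huZu : u * Z * u = u)
    (hk : Z • X = Y • k) (hk' : X = V • k') :
    (u * Y + (1 - Z * u) * V) • ((Z * u) • k + (1 - Z * u) • k') = X := by
  linear_combination (norm := module) (u * Z * u) • hk.symm + ((1 - Z * u) ^ 2) • hk'.symm
    - Y • huZu • k' + (2 * u) • hZuZ • X - (u * V) • hZuZ • k

section Gauge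

variable {Ω : Type*} [MeasurableSpace Ω] {P : Measure Ω}
  {E : Type*} [AddCommGroup E] [Module (Ω →ₘ[P] ℝ) E] {K : Set E} {X : E}

theorem L0pp.nonneg {V : Ω →ₘ[P] ℝ} (hV : L0pp P V) : 0 ≤ V :=
  AEEqFun.nonneg_iff_ae.2 (hV.mono fun _ => le_of_lt)

theorem mul_mem_gaugeSet {Y Z : Ω →ₘ[P] ℝ} (hZ : 0 ≤ Z) (hY : Y ∈ gaugeSet P K X) :
    Z * Y ∈ gaugeSet P K (Z • X) := by
  obtain ⟨hY0, k, hk, rfl⟩ := hY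
  exact ⟨mul_nonneg hZ hY0, k, hk, mul_smul Z Y k⟩

theorem IsL0Convex.mem_gaugeSet_of_smul (hK : IsL0Convex P K) {Z u V Y : Ω →ₘ[P] ℝ}
    (hZ : 0 ≤ Z) (hu : 0 ≤ u) (hZu : Z * u ≤ 1) (hZuZ : Z * u * Z = Z) (huZu : u * Z * u = u)
    (hV : V ∈ gaugeSet P K X) (hY : Y ∈ gaugeSet P K (Z • X)) :
    u * Y + (1 - Z * u) * V ∈ gaugeSet P K X := by
  obtain ⟨hV0, k', hk'K, hk'⟩ := hV
  obtain ⟨hY0, k, hkK, hk⟩ := hY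
  exact ⟨add_nonneg (mul_nonneg hu hY0) (mul_nonneg (sub_nonneg.2 hZu) hV0), _,
    hK k hkK k' hk'K (Z * u) (mul_nonneg hZ hu) hZu,
    smul_convexComb_eq hZuZ huZu hk.symm hk'.symm⟩

end Gauge

theorem stmt_6_general {Ω : Type*} [MeasurableSpace Ω] (P : MeasureTheory.Measure Ω)
    {E : Type*} [AddCommGroup E] [Module (Ω →ₘ[P] ℝ) E]
    (K : Set E) (hconv : IsL0Convex P K) (habs : IsL0Absorbent P K)
    (X : E) (a : Ω →ₘ[P] ℝ) (ha : IsGLB (gaugeSet P K X) a) :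
    ∀ Z : Ω →ₘ[P] ℝ, 0 ≤ Z → IsGLB (gaugeSet P K (Z • X)) (Z * a) := by
  intro Z hZ
  obtain ⟨u, hu, hZu, hZuZ, huZu⟩ := AEEqFun.exists_generalizedInverse hZ
  obtain ⟨V, hVpos, hVX⟩ := habs X
  have hV : V ∈ gaugeSet P K X := ⟨hVpos.nonneg, hVX⟩
  exact ha.mul_of_generalizedInverse hZ hu hZu hZuZ hV (fun _ => mul_mem_gaugeSet hZ)
    (fun _ hY => hY.1) fun _ => hconv.mem_gaugeSet_of_smul hZ hu hZu hZuZ huZu hV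

/-- `Z · p_K(X) = p_K(Z • X)` for `Z ∈ L⁰₊` and an `L⁰`-convex,
`L⁰`-absorbent `K`. -/
theorem stmt_6 {Ω : Type*} [MeasurableSpace Ω] (P : MeasureTheory.Measure Ω)
    [IsProbabilityMeasure P]
    {E : Type*} [AddCommGroup E] [Module (Ω →ₘ[P] ℝ) E]
    (K : Set E) (hconv : IsL0Convex P K) (habs : IsL0Absorbent P K)
    (X : E) (a : Ω →ₘ[P] ℝ) (ha : IsGLB (gaugeSet P K X) a) :
    ∀ Z : Ω →ₘ[P] ℝ, 0 ≤ Z → IsGLB (gaugeSet P K (Z • X)) (Z * a) :=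
  stmt_6_general P K hconv habs X a ha
end

section
/- Let E be a module over L⁰ and K ⊆ E an L⁰-convex, L⁰-absorbent and L⁰-balanced set, and let X ∈ E. If a ∈ L⁰ is a greatest lower bound (a.e. order) of {Y ∈ L⁰₊ : X ∈ Y•K}, then for every Z ∈ L⁰ the element |Z|·a is a greatest lower bound of {Y ∈ L⁰₊ : Z•X ∈ Y•K}; i.e., p_K(Z•X) = |Z|·p_K(X) for all Z ∈ L⁰. -/
open MeasureTheory Filter Pointwise

variable {Ω : Type*} [MeasurableSpace Ω] (P : MeasureTheory.Measure Ω ) [IsProbabilityMeasure P]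

/-!
Write `Z = s * |Z|` with `s = ±1`. Balancedness makes the gauge set invariant under `s`, so we may
assume `Z ≥ 0`. Let `u` be the pointwise inverse of `Z` (zero where `Z = 0`), so that `e = u * Z` is
the indicator of `{Z ≠ 0}`. Multiplying by `Z` maps the gauge set of `X` into that of `Z • X`, which
together with `u` and an absorbing multiple `W` of `X` gives `b ≤ Z * a` for every lower bound `b`.
Conversely, if `Z • X ∈ Y • K` then `e • X ∈ (u * Y) • K`, and convexity glues this along `e` with
`X ∈ W • K` into `X ∈ V • K` where `V = e * u * Y + (1 - e) * W`; hence `Z * a ≤ Z * V = e * Y ≤ Y`.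
-/

namespace MeasureTheory.AEEqFun

variable {α : Type*} [MeasurableSpace α] {μ : Measure α}

instance instIsOrderedAddMonoid {β : Type*} [TopologicalSpace β] [AddCommMonoid β]
    [PartialOrder β] [IsOrderedAddMonoid β] [ContinuousAdd β] :
    IsOrderedAddMonoid (α →ₘ[μ] β) where
  add_le_add_left f g hfg h := by
    rw [← coeFn_le] at hfg ⊢
    filter_upwards [coeFn_add f h, coeFn_add g h, hfg] with ω hf hg hfg
    simpa only [hf, hg, Pi.add_apply] using add_le_add_left hfg (h ω)

instance instZeroLEOneClass {β : Type*} [TopologicalSpace β] [Zero β] [One β] [Preorder β]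
    [ZeroLEOneClass β] : ZeroLEOneClass (α →ₘ[μ] β) where
  zero_le_one := by
    rw [← coeFn_le]
    filter_upwards [coeFn_zero (β := β) (μ := μ), coeFn_one (β := β) (μ := μ)] with ω h0 h1
    simp only [h0, h1, Pi.zero_apply, Pi.one_apply, zero_le_one]

instance instIsOrderedRing : IsOrderedRing (α →ₘ[μ] ℝ) :=
  IsOrderedRing.of_mul_nonneg fun f g hf hg => by
    rw [← coeFn_le] at hf hg ⊢
    filter_upwards [coeFn_mul f g, coeFn_zero (β := ℝ) (μ := μ), hf, hg] with ω hfg h0 hf hg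
    simp only [h0, Pi.zero_apply] at hf hg ⊢
    simpa only [hfg, Pi.mul_apply] using mul_nonneg hf hg

lemma exists_sign_mul_abs_eq (Z : α →ₘ[μ] ℝ) :
    ∃ s : α →ₘ[μ] ℝ, |s| ≤ 1 ∧ s * s = 1 ∧ s * |Z| = Z := by
  classical
  set s : α →ₘ[μ] ℝ := mk (fun ω => if 0 ≤ Z ω then 1 else -1)
    ((Measurable.ite (measurableSet_le measurable_const Z.measurable)
      measurable_const measurable_const).aestronglyMeasurable)
  have hs : ⇑s =ᵐ[μ] fun ω => if 0 ≤ Z ω then 1 else -1 := coeFn_mk _ _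
  refine ⟨s, ?_, ?_, ?_⟩
  · rw [← coeFn_le]
    filter_upwards [coeFn_abs s, coeFn_one (β := ℝ) (μ := μ), hs] with ω habs h1 hs
    rw [habs, h1, Pi.one_apply, hs]
    split_ifs <;> norm_num
  · apply ext
    filter_upwards [coeFn_mul s s, coeFn_one (β := ℝ) (μ := μ), hs] with ω hss h1 hs
    rw [hss, h1, Pi.mul_apply, Pi.one_apply, hs]
    split_ifs <;> norm_num
  · apply ext
    filter_upwards [coeFn_mul s |Z|, coeFn_abs Z, hs] with ω hsZ habs hs
    rw [hsZ, Pi.mul_apply, habs, hs]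
    split_ifs with h
    · rw [abs_of_nonneg h, one_mul]
    · rw [abs_of_neg (not_le.mp h), neg_one_mul, neg_neg]

lemma exists_nonneg_pseudoinverse {Z : α →ₘ[μ] ℝ} (hZ : 0 ≤ Z) :
    ∃ u : α →ₘ[μ] ℝ, 0 ≤ u ∧ u * Z ≤ 1 ∧ Z * (u * Z) = Z := by
  set u : α →ₘ[μ] ℝ := mk (fun ω => (Z ω)⁻¹) Z.measurable.inv.aestronglyMeasurable
  have hu : ⇑u =ᵐ[μ] fun ω => (Z ω)⁻¹ := coeFn_mk _ _
  rw [← coeFn_le] at hZ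
  refine ⟨u, ?_, ?_, ?_⟩
  · rw [← coeFn_le]
    filter_upwards [coeFn_zero (β := ℝ) (μ := μ), hu, hZ] with ω h0 hu hZ
    simp only [h0, Pi.zero_apply] at hZ ⊢
    rw [hu]
    exact inv_nonneg.mpr hZ
  · rw [← coeFn_le]
    filter_upwards [coeFn_mul u Z, coeFn_one (β := ℝ) (μ := μ), hu] with ω huZ h1 hu
    rw [huZ, h1, Pi.mul_apply, Pi.one_apply, hu]
    exact inv_mul_le_one
  · apply ext
    filter_upwards [coeFn_mul Z (u * Z), coeFn_mul u Z, hu] with ω hZuZ huZ hu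
    rw [hZuZ, Pi.mul_apply, huZ, Pi.mul_apply, hu, mul_comm _ (Z ω), ← mul_assoc,
      mul_self_mul_inv]

lemma _root_.L0pp.nonneg_s9 {Y : α →ₘ[μ] ℝ} (hY : L0pp μ Y) : 0 ≤ Y := by
  rw [← coeFn_le]
  filter_upwards [coeFn_zero (β := ℝ) (μ := μ), hY] with ω h0 hY
  simpa only [h0, Pi.zero_apply] using hY.le

end MeasureTheory.AEEqFun

section Gauge

variable {Ω : Type*} [MeasurableSpace Ω] {P : Measure Ω}
  {E : Type*} [AddCommGroup E] [Module (Ω →ₘ[P] ℝ) E] {K : Set E}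

lemma gaugeSet_nonempty (habs : IsL0Absorbent P K) (X : E) : (gaugeSet P K X).Nonempty :=
  let ⟨W, hW, hXW⟩ := habs X
  ⟨W, hW.nonneg_s9, hXW⟩

lemma gaugeSet_subset_gaugeSet_smul (hbal : IsL0Balanced P K) {s : Ω →ₘ[P] ℝ} (hs : |s| ≤ 1)
    (X : E) : gaugeSet P K X ⊆ gaugeSet P K (s • X) := by
  rintro Y ⟨hY, k, hk, rfl⟩
  exact ⟨hY, s • k, hbal k hk s hs, smul_comm Y s k⟩

lemma gaugeSet_smul_of_mul_self_eq_one (hbal : IsL0Balanced P K) {s : Ω →ₘ[P] ℝ}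
    (hs : |s| ≤ 1) (hss : s * s = 1) (X : E) : gaugeSet P K (s • X) = gaugeSet P K X := by
  refine (gaugeSet_subset_gaugeSet_smul hbal hs (s • X)).trans ?_ |>.antisymm
    (gaugeSet_subset_gaugeSet_smul hbal hs X)
  rw [smul_smul, hss, one_smul]

lemma mul_mem_gaugeSet_smul {Z Y : Ω →ₘ[P] ℝ} (hZ : 0 ≤ Z) {X : E} (hY : Y ∈ gaugeSet P K X) :
    Z * Y ∈ gaugeSet P K (Z • X) :=
  ⟨mul_nonneg hZ hY.1, by rw [mul_smul]; exact Set.smul_mem_smul_set hY.2⟩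

lemma smul_add_one_sub_smul_mem_smul (hconv : IsL0Convex P K) {e V₁ V₂ : Ω →ₘ[P] ℝ}
    (he₀ : 0 ≤ e) (he₁ : e ≤ 1) (hee : e * e = e) {X₁ X₂ : E} (h₁ : X₁ ∈ V₁ • K)
    (h₂ : X₂ ∈ V₂ • K) : e • X₁ + (1 - e) • X₂ ∈ (e * V₁ + (1 - e) * V₂) • K := by
  obtain ⟨k₁, hk₁, rfl⟩ := h₁
  obtain ⟨k₂, hk₂, rfl⟩ := h₂
  refine ⟨e • k₁ + (1 - e) • k₂, hconv k₁ hk₁ k₂ hk₂ e he₀ he₁, ?_⟩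
  simp only [smul_add, smul_smul]
  congr 2
  · linear_combination (V₁ - V₂) * hee
  · linear_combination (V₂ - V₁) * hee

lemma mul_mem_lowerBounds_gaugeSet_smul (hconv : IsL0Convex P K) (habs : IsL0Absorbent P K)
    {Z a : Ω →ₘ[P] ℝ} (hZ : 0 ≤ Z) {X : E} (ha : a ∈ lowerBounds (gaugeSet P K X)) :
    Z * a ∈ lowerBounds (gaugeSet P K (Z • X)) := by
  rintro Y ⟨hY, hZX⟩
  obtain ⟨u, hu, huZ, hZuZ⟩ := AEEqFun.exists_nonneg_pseudoinverse hZ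
  obtain ⟨W, hW, hXW⟩ := gaugeSet_nonempty habs X
  set e := u * Z
  have hee : e * e = e := by linear_combination u * hZuZ
  have heX : e • X ∈ (u * Y) • K := by
    rw [mul_smul, mul_smul]
    exact Set.smul_mem_smul_set hZX
  have hV := smul_add_one_sub_smul_mem_smul hconv (mul_nonneg hu hZ) huZ hee heX hXW
  rw [smul_smul, hee, ← add_smul, add_sub_cancel, one_smul] at hV
  calc Z * a ≤ Z * (e * (u * Y) + (1 - e) * W) :=
        mul_le_mul_of_nonneg_left (ha ⟨by positivity, hV⟩) hZ
    _ = e * Y := by linear_combination (u * Y - W) * hZuZ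
    _ ≤ Y := mul_le_of_le_one_left hY huZ

lemma le_mul_of_mem_lowerBounds_gaugeSet_smul (habs : IsL0Absorbent P K) {Z a b : Ω →ₘ[P] ℝ}
    (hZ : 0 ≤ Z) {X : E} (ha : a ∈ upperBounds (lowerBounds (gaugeSet P K X)))
    (hb : b ∈ lowerBounds (gaugeSet P K (Z • X))) : b ≤ Z * a := by
  obtain ⟨u, hu, huZ, hZuZ⟩ := AEEqFun.exists_nonneg_pseudoinverse hZ
  obtain ⟨W, hW⟩ := gaugeSet_nonempty habs X
  have hub : u * b ≤ a := ha fun Y hY => calc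
    u * b ≤ u * (Z * Y) := mul_le_mul_of_nonneg_left (hb (mul_mem_gaugeSet_smul hZ hY)) hu
    _ = u * Z * Y := (mul_assoc _ _ _).symm
    _ ≤ Y := mul_le_of_le_one_left hY.1 huZ
  have hbW : (1 - u * Z) * b ≤ 0 := calc
    (1 - u * Z) * b ≤ (1 - u * Z) * (Z * W) :=
      mul_le_mul_of_nonneg_left (hb (mul_mem_gaugeSet_smul hZ hW)) (sub_nonneg.mpr huZ)
    _ = 0 := by linear_combination -W * hZuZ
  calc b = Z * (u * b) + (1 - u * Z) * b := by ring
    _ ≤ Z * a + 0 := add_le_add (mul_le_mul_of_nonneg_left hub hZ) hbW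
    _ = Z * a := add_zero _

lemma isGLB_gaugeSet_smul_of_nonneg (hconv : IsL0Convex P K) (habs : IsL0Absorbent P K)
    {Z a : Ω →ₘ[P] ℝ} (hZ : 0 ≤ Z) {X : E} (ha : IsGLB (gaugeSet P K X) a) :
    IsGLB (gaugeSet P K (Z • X)) (Z * a) :=
  ⟨mul_mem_lowerBounds_gaugeSet_smul hconv habs hZ ha.1,
    fun _ hb => le_mul_of_mem_lowerBounds_gaugeSet_smul habs hZ ha.2 hb⟩

end Gauge

theorem stmt_9_general {Ω : Type*} [MeasurableSpace Ω] (P : MeasureTheory.Measure Ω)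
    {E : Type*} [AddCommGroup E] [Module (Ω →ₘ[P] ℝ) E]
    (K : Set E) (hconv : IsL0Convex P K) (habs : IsL0Absorbent P K)
    (hbal : IsL0Balanced P K)
    (X : E) (a : Ω →ₘ[P] ℝ) (ha : IsGLB (gaugeSet P K X) a) :
    ∀ Z : Ω →ₘ[P] ℝ, IsGLB (gaugeSet P K (Z • X)) (|Z| * a) := by
  intro Z
  obtain ⟨s, hs, hss, hsZ⟩ := AEEqFun.exists_sign_mul_abs_eq Z
  have hZX : Z • X = s • |Z| • X := by rw [smul_smul, hsZ]
  rw [hZX, gaugeSet_smul_of_mul_self_eq_one hbal hs hss]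
  exact isGLB_gaugeSet_smul_of_nonneg hconv habs (abs_nonneg Z) ha

/-- `p_K(Z • X) = |Z| · p_K(X)` for all `Z ∈ L⁰` when `K` is moreover
`L⁰`-balanced. -/
theorem stmt_9 {Ω : Type*} [MeasurableSpace Ω] (P : MeasureTheory.Measure Ω)
    [IsProbabilityMeasure P]
    {E : Type*} [AddCommGroup E] [Module (Ω →ₘ[P] ℝ) E]
    (K : Set E) (hconv : IsL0Convex P K) (habs : IsL0Absorbent P K)
    (hbal : IsL0Balanced P K)
    (X : E) (a : Ω →ₘ[P] ℝ) (ha : IsGLB (gaugeSet P K X) a) :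
    ∀ Z : Ω →ₘ[P] ℝ, IsGLB (gaugeSet P K (Z • X)) (|Z| * a) :=
  stmt_9_general P K hconv habs hbal X a ha
end

section
/- For every ε ∈ L⁰₊₊, the set U_ε := {Y ∈ L⁰ : ∃ finite I ⊆ ℕ such that |Y·1_{A_i}| ≤ ε a.e. for all i ∉ I} is L⁰-convex, L⁰-absorbent and L⁰-balanced as a subset of the L⁰-module L⁰. -/
/-!
Checked a.e. pointwise, `L⁰` is an ordered ring with `|f * g| = |f| * |g|`, so convexity and
balancedness of `U_ε` follow from the triangle inequality exactly as for real numbers, keeping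
the finite exceptional set (the union of the two sets for convexity). For absorbency, any `X`
factors as `Y * Z` with `Y = max (|X| / ε) 1 > 0` and `|Z| = |X| / Y ≤ ε`, and then
`|Z * 1_{A_i}| ≤ ε` for every `i`.
-/

open MeasureTheory Filter Pointwise

variable {Ω : Type*} [MeasurableSpace Ω] (P : MeasureTheory.Measure Ω ) [IsProbabilityMeasure P]

/-- The set `U_ε` of the counterexample: `Y ∈ U_ε` iff `|Y·1_{A_i}| ≤ ε` a.e. for all `i`
outside some finite set `I ⊆ ℕ`. -/
def Uset (A : ℕ → Set Ω) (hA : ∀ n, MeasurableSet (A n)) (ε : Ω →ₘ[P] ℝ) :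
    Set (Ω →ₘ[P] ℝ) :=
  {Y : Ω →ₘ[P] ℝ | ∃ I : Finset ℕ, ∀ i ∉ I, |Y * ind P (A i) (hA i)| ≤ ε}


namespace MeasureTheory.AEEqFun

variable {Ω : Type*} [MeasurableSpace Ω] {P : Measure Ω}

theorem abs_mul (f g : Ω →ₘ[P] ℝ) : |f * g| = |f| * |g| := by
  apply ext
  filter_upwards [coeFn_abs (f * g), coeFn_mul f g, coeFn_mul |f| |g|, coeFn_abs f,
    coeFn_abs g] with ω h h1 h2 h3 h4
  simp only [h, h1, h2, h3, h4, Pi.mul_apply, _root_.abs_mul]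

instance inst_s11 : IsOrderedAddMonoid (Ω →ₘ[P] ℝ) where
  add_le_add_left f g hfg h := by
    rw [← coeFn_le] at hfg ⊢
    filter_upwards [hfg, coeFn_add f h, coeFn_add g h] with ω hω hf hg
    simpa only [hf, hg, Pi.add_apply] using add_le_add_left hω (h ω)

instance : ZeroLEOneClass (Ω →ₘ[P] ℝ) where
  zero_le_one := by
    rw [← coeFn_le]
    filter_upwards [coeFn_zero (β := ℝ) (μ := P), coeFn_one (β := ℝ) (μ := P)] with ω h0 h1
    simp only [h0, h1, Pi.zero_apply, Pi.one_apply, zero_le_one]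

instance inst_s11_2 : IsOrderedRing (Ω →ₘ[P] ℝ) :=
  IsOrderedRing.of_mul_nonneg fun f g hf hg => by
    rw [← coeFn_le] at hf hg ⊢
    filter_upwards [hf, hg, coeFn_zero (β := ℝ) (μ := P), coeFn_mul f g] with ω hfω hgω h0 hfg
    simp only [h0, hfg, Pi.zero_apply, Pi.mul_apply] at hfω hgω ⊢
    exact mul_nonneg hfω hgω

end MeasureTheory.AEEqFun

section Uset

variable {Ω : Type*} [MeasurableSpace Ω] {P : Measure Ω}

theorem coeFn_ind (A : Set Ω) (hA : MeasurableSet A) :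
    ⇑(ind P A hA) =ᵐ[P] A.indicator fun _ => (1 : ℝ) :=
  AEEqFun.coeFn_mk _ _

theorem abs_ind_le_one (A : Set Ω) (hA : MeasurableSet A) : |ind P A hA| ≤ 1 := by
  rw [← AEEqFun.coeFn_le]
  filter_upwards [AEEqFun.coeFn_abs (ind P A hA), coeFn_ind A hA,
    AEEqFun.coeFn_one (β := ℝ) (μ := P)] with ω habs hind h1
  rw [habs, h1, Pi.one_apply, hind]
  by_cases hω : ω ∈ A <;> simp [hω]

theorem exists_L0pp_mul_abs_le {ε : Ω →ₘ[P] ℝ} (hε : L0pp P ε) (X : Ω →ₘ[P] ℝ) :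
    ∃ Y Z : Ω →ₘ[P] ℝ, L0pp P Y ∧ |Z| ≤ ε ∧ X = Y * Z := by
  set y : Ω → ℝ := fun ω => max (|X ω| / ε ω) 1
  have hy : AEStronglyMeasurable y P := by fun_prop
  have hz : AEStronglyMeasurable (fun ω => X ω / y ω) P :=
    (X.aestronglyMeasurable.aemeasurable.div hy.aemeasurable).aestronglyMeasurable
  have hy_pos (ω : Ω) : 0 < y ω := one_pos.trans_le (le_max_right _ _)
  refine ⟨AEEqFun.mk y hy, AEEqFun.mk _ hz, ?_, ?_, ?_⟩
  · filter_upwards [AEEqFun.coeFn_mk y hy] with ω h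
    exact h ▸ hy_pos ω
  · rw [← AEEqFun.coeFn_le]
    filter_upwards [hε, AEEqFun.coeFn_abs (AEEqFun.mk _ hz), AEEqFun.coeFn_mk _ hz]
      with ω hεω habs hzω
    rw [habs, hzω, abs_div, abs_of_pos (hy_pos ω), div_le_iff₀ (hy_pos ω),
      ← div_le_iff₀' hεω]
    exact le_max_left _ _
  · apply AEEqFun.ext
    filter_upwards [AEEqFun.coeFn_mul (AEEqFun.mk y hy) (AEEqFun.mk _ hz),
      AEEqFun.coeFn_mk y hy, AEEqFun.coeFn_mk _ hz] with ω h hyω hzω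
    rw [h, Pi.mul_apply, hyω, hzω, mul_div_cancel₀ _ (hy_pos ω).ne']

variable (A : ℕ → Set Ω) (hA : ∀ n, MeasurableSet (A n)) (ε : Ω →ₘ[P] ℝ)

theorem isL0Convex_Uset : IsL0Convex P (Uset P A hA ε) := by
  rintro X₁ ⟨I₁, h₁⟩ X₂ ⟨I₂, h₂⟩ Y hY₀ hY₁
  refine ⟨I₁ ∪ I₂, fun i hi => ?_⟩
  rw [Finset.mem_union, not_or] at hi
  set e := ind P (A i) (hA i)
  have hY₁' : 0 ≤ 1 - Y := sub_nonneg.mpr hY₁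
  calc |(Y • X₁ + (1 - Y) • X₂) * e| = |Y * (X₁ * e) + (1 - Y) * (X₂ * e)| := by
        rw [smul_eq_mul, smul_eq_mul, add_mul, mul_assoc, mul_assoc]
    _ ≤ |Y * (X₁ * e)| + |(1 - Y) * (X₂ * e)| := abs_add_le _ _
    _ = Y * |X₁ * e| + (1 - Y) * |X₂ * e| := by
        rw [AEEqFun.abs_mul Y, AEEqFun.abs_mul (1 - Y), abs_of_nonneg hY₀, abs_of_nonneg hY₁']
    _ ≤ Y * ε + (1 - Y) * ε := by grw [h₁ i hi.1, h₂ i hi.2]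
    _ = ε := by ring

theorem isL0Balanced_Uset : IsL0Balanced P (Uset P A hA ε) := by
  rintro X ⟨I, hI⟩ Y hY
  refine ⟨I, fun i hi => ?_⟩
  calc |Y • X * ind P (A i) (hA i)| = |Y| * |X * ind P (A i) (hA i)| := by
        rw [smul_eq_mul, mul_assoc, AEEqFun.abs_mul]
    _ ≤ 1 * ε := mul_le_mul hY (hI i hi) (abs_nonneg _) zero_le_one
    _ = ε := one_mul ε

theorem isL0Absorbent_Uset (hε : L0pp P ε) : IsL0Absorbent P (Uset P A hA ε) := by
  intro X
  obtain ⟨Y, Z, hY, hZ, rfl⟩ := exists_L0pp_mul_abs_le hε X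
  refine ⟨Y, hY, Set.smul_mem_smul_set ⟨∅, fun i _ => ?_⟩⟩
  calc |Z * ind P (A i) (hA i)| = |Z| * |ind P (A i) (hA i)| := AEEqFun.abs_mul _ _
    _ ≤ ε * 1 := mul_le_mul hZ (abs_ind_le_one _ _) (abs_nonneg _) ((abs_nonneg Z).trans hZ)
    _ = ε := mul_one ε

end Uset

theorem stmt_11_general {Ω : Type*} [MeasurableSpace Ω] (P : MeasureTheory.Measure Ω)
    (A : ℕ → Set Ω) (hA : ∀ n, MeasurableSet (A n))
    (ε : Ω →ₘ[P] ℝ) (hε : L0pp P ε) :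
    IsL0Convex P (Uset P A hA ε) ∧ IsL0Absorbent P (Uset P A hA ε) ∧
      IsL0Balanced P (Uset P A hA ε) :=
  ⟨isL0Convex_Uset A hA ε, isL0Absorbent_Uset A hA ε hε, isL0Balanced_Uset A hA ε⟩

/-- each `U_ε` is `L⁰`-convex, `L⁰`-absorbent and `L⁰`-balanced in the
`L⁰`-module `L⁰`. -/
theorem stmt_11 {Ω : Type*} [MeasurableSpace Ω] (P : MeasureTheory.Measure Ω)
    [IsProbabilityMeasure P]
    (A : ℕ → Set Ω) (hA : ∀ n, MeasurableSet (A n))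
    (hdisj : Pairwise (Function.onFun Disjoint A)) (hcover : (⋃ n, A n) = Set.univ)
    (hpos : ∀ n, 0 < P (A n))
    (ε : Ω →ₘ[P] ℝ) (hε : L0pp P ε) :
    IsL0Convex P (Uset P A hA ε) ∧ IsL0Absorbent P (Uset P A hA ε) ∧
      IsL0Balanced P (Uset P A hA ε) :=
  stmt_11_general P A hA ε hε
end
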